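/- Let (X,d) be a compact metric space and (f_n) a sequence of continuous self-maps that is either finitely generated or converges uniformly to a map f. Then for every k ∈ ℕ, the system (X, f_{1,∞}) is Kato chaotic (sensitive and accessible) if and only if the k-th iterate system (X, f_{1,∞}^{[k]}) is Kato chaotic. -/

import Mathlib

open Filter

variable {X : Type*}

/-- `orb f n = f_n ∘ ⋯ ∘ f_1` (0-based: `f k` is the `(k+1)`-st map). -/
def orb (f : ℕ → X → X) : ℕ → X → X
  | 0 => id
  | n + 1 => f n ∘ orb f n

/-- Sensitivity of the non-autonomous system along the time sequence `τ`. -/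
def Sensitive [MetricSpace X] (f : ℕ → X → X) (τ : ℕ → ℕ) : Prop :=
  ∃ δ > 0, ∀ U : Set X, IsOpen U → U.Nonempty →
    ∃ x ∈ U, ∃ y ∈ U, ∃ n : ℕ, δ < dist (orb f (τ n) x) (orb f (τ n) y)

/-- Accessibility of the non-autonomous system along the time sequence `τ`. -/
def Accessible [MetricSpace X] (f : ℕ → X → X) (τ : ℕ → ℕ) : Prop :=
  ∀ ε : ℝ, 0 < ε → ∀ U V : Set X, IsOpen U → U.Nonempty → IsOpen V → V.Nonempty →
    ∃ x ∈ U, ∃ y ∈ V, ∃ n : ℕ, dist (orb f (τ n) x) (orb f (τ n) y) < ε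

/-- Kato's chaos = sensitivity + accessibility. -/
def KatoChaos [MetricSpace X] (f : ℕ → X → X) (τ : ℕ → ℕ) : Prop :=
  Sensitive f τ ∧ Accessible f τ

/-!
Under either hypothesis the maps `f n` form a uniformly equicontinuous family, so two orbits
that are close at some time `m` stay close during the next `k` steps, uniformly in `m`.
Separation at a time `n` therefore forces separation at the multiple of `k` just below `n`,
and closeness at time `n` gives closeness at the multiple of `k` just above `n`. The converse
implications hold because the times `k n` are among all times.
-/

open Topology Uniformity

section Equicontinuity

variable {ι κ α β γ : Type*} [UniformSpace α] [UniformSpace β] [UniformSpace γ]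

theorem UniformEquicontinuous.comp_uniformEquicontinuous {F : ι → β → α} {G : κ → γ → β}
    (hF : UniformEquicontinuous F) (hG : UniformEquicontinuous G) :
    UniformEquicontinuous fun p : ι × κ => F p.1 ∘ G p.2 := fun U hU =>
  (hG _ (hF U hU)).mono fun _ h p => h p.2 p.1

theorem Set.Finite.uniformEquicontinuous {H : Set (β → α)} (hH : H.Finite)
    (h : ∀ g ∈ H, UniformContinuous g) : H.UniformEquicontinuous :=
  have := hH.to_subtype
  uniformEquicontinuous_finite.mpr fun g => h g g.2

theorem TendstoUniformly.uniformEquicontinuous [Infinite ι] {M : Type*} [PseudoMetricSpace M]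
    {F : ι → β → M} {g : β → M} (hF : ∀ i, UniformContinuous (F i))
    (hFg : TendstoUniformly F g cofinite) : UniformEquicontinuous F := by
  rw [Metric.uniformEquicontinuous_iff_right]
  intro ε hε
  have hg : UniformContinuous g := hFg.uniformContinuous (Eventually.of_forall hF).frequently
  have htail := Metric.tendstoUniformly_iff.mp hFg (ε / 3) (by positivity)
  have hhead : ∀ᶠ xy : β × β in 𝓤 β, ∀ i ∈ {i | ¬∀ x, dist (g x) (F i x) < ε / 3},
      dist (F i xy.1) (F i xy.2) < ε :=
    (eventually_all_finite (eventually_cofinite.mp htail)).mpr fun i _ =>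
      hF i (Metric.dist_mem_uniformity hε)
  filter_upwards [hhead, hg (Metric.dist_mem_uniformity (by positivity : 0 < ε / 3))]
    with ⟨x, y⟩ hFxy hgxy i
  by_cases hi : ∀ z, dist (g z) (F i z) < ε / 3
  · calc dist (F i x) (F i y) ≤ dist (F i x) (g x) + dist (g x) (g y) + dist (g y) (F i y) :=
          dist_triangle4 _ _ _ _
      _ < ε / 3 + ε / 3 + ε / 3 := by
          rw [dist_comm (F i x)]
          exact add_lt_add (add_lt_add (hi x) hgxy) (hi y)
      _ = ε := by ring
  · exact hFxy i hi

end Equicontinuity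

section Orbit

theorem orb_add (f : ℕ → X → X) (m r : ℕ) :
    orb f (m + r) = orb (fun i => f (m + i)) r ∘ orb f m := by
  induction r with
  | zero => rfl
  | succ r ih => rw [← add_assoc, orb, ih]; rfl

theorem UniformEquicontinuous.orb_shift [UniformSpace X] {f : ℕ → X → X}
    (hf : UniformEquicontinuous f) (r : ℕ) :
    UniformEquicontinuous fun m => orb (fun i => f (m + i)) r := by
  induction r with
  | zero => exact fun U hU => mem_of_superset hU fun _ h _ => h
  | succ r ih => exact (hf.comp_uniformEquicontinuous ih).comp fun m => (m + r, m)

theorem UniformEquicontinuous.exists_dist_orb_add_lt [PseudoMetricSpace X] {f : ℕ → X → X}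
    (hf : UniformEquicontinuous f) (R : ℕ) {ε : ℝ} (hε : 0 < ε) :
    ∃ δ > 0, ∀ r ≤ R, ∀ m x y, dist (orb f m x) (orb f m y) ≤ δ →
      dist (orb f (m + r) x) (orb f (m + r) y) < ε := by
  have hshift : ∀ᶠ p : X × X in 𝓤 X, ∀ r ∈ Set.Iic R, ∀ m,
      dist (orb (fun i => f (m + i)) r p.1) (orb (fun i => f (m + i)) r p.2) < ε :=
    (eventually_all_finite (Set.finite_Iic R)).mpr fun r _ =>
      Metric.uniformEquicontinuous_iff_right.mp (hf.orb_shift r) ε hε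
  obtain ⟨δ, hδ, hδε⟩ := Metric.mem_uniformity_dist.mp hshift
  refine ⟨δ / 2, half_pos hδ, fun r hr m x y hxy => ?_⟩
  rw [orb_add]
  exact hδε (hxy.trans_lt (half_lt_self hδ)) r hr m

end Orbit

section Kato

variable [MetricSpace X] {f : ℕ → X → X}

theorem Sensitive.of_comp {σ τ : ℕ → ℕ} (h : Sensitive f (σ ∘ τ)) : Sensitive f σ := by
  obtain ⟨δ, hδ, hsen⟩ := h
  refine ⟨δ, hδ, fun U hU hne => ?_⟩
  obtain ⟨x, hx, y, hy, n, hn⟩ := hsen U hU hne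
  exact ⟨x, hx, y, hy, τ n, hn⟩

theorem Accessible.of_comp {σ τ : ℕ → ℕ} (h : Accessible f (σ ∘ τ)) : Accessible f σ := by
  intro ε hε U V hU hUne hV hVne
  obtain ⟨x, hx, y, hy, n, hn⟩ := h ε hε U V hU hUne hV hVne
  exact ⟨x, hx, y, hy, τ n, hn⟩

theorem Sensitive.mul (hf : UniformEquicontinuous f) {k : ℕ} (hk : 0 < k)
    (h : Sensitive f id) : Sensitive f (k * ·) := by
  obtain ⟨ε, hε, hsen⟩ := h
  obtain ⟨δ, hδ, hδε⟩ := hf.exists_dist_orb_add_lt k hε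
  refine ⟨δ, hδ, fun U hU hne => ?_⟩
  obtain ⟨x, hx, y, hy, n, hn⟩ := hsen U hU hne
  refine ⟨x, hx, y, hy, n / k, not_le.mp fun hle => ?_⟩
  have hclose := hδε (n % k) (Nat.mod_lt n hk).le _ x y hle
  rw [Nat.div_add_mod] at hclose
  exact (hn.trans hclose).false

theorem Accessible.mul (hf : UniformEquicontinuous f) {k : ℕ} (hk : 0 < k)
    (h : Accessible f id) : Accessible f (k * ·) := by
  intro ε hε U V hU hUne hV hVne
  obtain ⟨δ, hδ, hδε⟩ := hf.exists_dist_orb_add_lt k hε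
  obtain ⟨x, hx, y, hy, n, hn⟩ := h δ hδ U V hU hUne hV hVne
  refine ⟨x, hx, y, hy, n / k + 1, ?_⟩
  have hround : n + (k - n % k) = k * (n / k + 1) := by
    have := Nat.div_add_mod n k
    have := Nat.mod_lt n hk
    rw [Nat.mul_add_one]
    omega
  simpa only [hround] using hδε (k - n % k) (Nat.sub_le k _) n x y hn.le

end Kato

theorem stmt_10 [MetricSpace X] [CompactSpace X] (f : ℕ → X → X)
    (hf : ∀ n, Continuous (f n))
    (hgen : (∃ F : Set (X → X), F.Finite ∧ (∀ g ∈ F, Continuous g) ∧ ∀ n, f n ∈ F) ∨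
      (∃ g : X → X, TendstoUniformly f g atTop))
    (k : ℕ) (hk : 0 < k) :
    KatoChaos f id ↔ KatoChaos f (fun n => k * n) := by
  have hequi : UniformEquicontinuous f := by
    rcases hgen with ⟨F, hF, hFc, hmem⟩ | ⟨g, hg⟩
    · refine uniformEquicontinuous_iff_range.mpr
        ((hF.uniformEquicontinuous fun g hg => ?_).mono (Set.range_subset_iff.mpr hmem))
      exact CompactSpace.uniformContinuous_of_continuous (hFc g hg)
    · rw [← Nat.cofinite_eq_atTop] at hg
      exact hg.uniformEquicontinuous fun n => CompactSpace.uniformContinuous_of_continuous (hf n)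
  exact ⟨fun ⟨hs, ha⟩ => ⟨hs.mul hequi hk, ha.mul hequi hk⟩,
    fun ⟨hs, ha⟩ => ⟨hs.of_comp (τ := (k * ·)), ha.of_comp (τ := (k * ·))⟩⟩
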